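/- The expectation of the symmetrizer in the state w = α^{⊗(m−1)} ⊗ β equals ⟨w, Π_sym w⟩ = |⟨α, β⟩|² + (1/m)(1 − |⟨α, β⟩|²), i.e. 1/m + (1 − 1/m)|⟨α, β⟩|². -/
import Mathlib

open Finset

lemma perm_sum (n : ℕ) (x : Fin (n+1)) (F : Fin (n+1) → ℂ) :
    ∑ π : Equiv.Perm (Fin (n+1)), F (π x) = (Nat.factorial n : ℂ) * ∑ y, F y := by
  rw [← Equiv.sum_comp (Equiv.permCongr (Equiv.swap x 0)).symm
    (fun π => F (π x))]
  rw [← Equiv.sum_comp (Equiv.Perm.decomposeFin.symm)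
    (fun σ => F (((Equiv.permCongr (Equiv.swap x 0)).symm σ) x))]
  have : ∀ p : Fin (n+1) × Equiv.Perm (Fin n),
      F (((Equiv.permCongr (Equiv.swap x 0)).symm (Equiv.Perm.decomposeFin.symm p)) x)
        = F (Equiv.swap x 0 p.1) := by
    intro ⟨p, q⟩
    simp [Equiv.permCongr_apply, Equiv.Perm.decomposeFin_symm_apply_zero]
  simp only [this]
  rw [Fintype.sum_prod_type, ← Equiv.sum_comp (Equiv.swap x 0) F]
  simp [Finset.sum_const, Fintype.card_perm, Finset.mul_sum]
lemma inner_sum' (m d : ℕ) (α β : Fin d → ℂ)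
    (hα : ∑ i, star (α i) * α i = 1) (hβ : ∑ i, star (β i) * β i = 1)
    (last : Fin m) (π : Equiv.Perm (Fin m)) :
    ∑ f : Fin m → Fin d, star (∏ i, (if i = last then β (f i) else α (f i)))
        * ∏ i, (if i = last then β (f (π i)) else α (f (π i)))
      = if π last = last then 1
        else (starRingEnd ℂ (∑ i, star (α i) * β i)) * (∑ i, star (α i) * β i) := by
  have hα' : ∑ i, (starRingEnd ℂ) (α i) * α i = 1 := hα
  have hβ' : ∑ i, (starRingEnd ℂ) (β i) * β i = 1 := hβ
  have hre : ∀ f : Fin m → Fin d,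
      (∏ i, (if i = last then β (f (π i)) else α (f (π i))))
        = ∏ j, (if j = π last then β (f j) else α (f j)) := by
    intro f
    rw [← Equiv.prod_comp π (fun j => if j = π last then β (f j) else α (f j))]
    simp [Equiv.apply_eq_iff_eq]
  simp only [hre, star_prod, ← Finset.prod_mul_distrib]
  rw [← Fintype.prod_sum (κ := fun _ : Fin m => Fin d) (fun j x => star (if j = last then β x else α x) * if j = π last then β x else α x)]
  by_cases hfix : π last = last
  · rw [if_pos hfix]
    apply Finset.prod_eq_one
    intro j _
    by_cases hj : j = last <;> simp [hj, hfix, hα', hβ']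
  · rw [if_neg hfix]
    have key : ∀ j : Fin m,
        (∑ x, star (if j = last then β x else α x) * (if j = π last then β x else α x))
          = (if j = last then starRingEnd ℂ (∑ i, star (α i) * β i) else 1)
            * (if j = π last then (∑ i, star (α i) * β i) else 1) := by
      intro j
      by_cases h1 : j = last
      · have h2 : ¬ j = π last := by rw [h1]; exact fun h => hfix h.symm
        simp only [if_pos h1, if_neg h2, mul_one, map_sum]
        simp [mul_comm]
      · by_cases h2 : j = π last
        · simp only [if_neg h1, if_pos h2, one_mul]
        · simp only [if_neg h1, if_neg h2, mul_one]
          exact hα'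
    simp only [key]
    rw [Finset.prod_mul_distrib]
    simp


/-- The expectation of the symmetrizer `Π_sym = (1/m!) ∑_{π ∈ S_m} P_π` in the
state `w = α^{⊗(m−1)} ⊗ β` equals `|⟨α,β⟩|² + (1/m)(1 − |⟨α,β⟩|²)`. -/
theorem stmt_4 (m d : ℕ) (hm : 1 ≤ m) (hd : 1 ≤ d)
    (α β : Fin d → ℂ)
    (hα : ∑ i, star (α i) * α i = 1) (hβ : ∑ i, star (β i) * β i = 1)
    (last : Fin m) (hlast : last = ⟨m - 1, by omega⟩)
    (w : (Fin m → Fin d) → ℂ)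
    (hw : w = fun f => ∏ i, (if i = last then β (f i) else α (f i))) :
    (m.factorial : ℂ)⁻¹ * ∑ π : Equiv.Perm (Fin m), ∑ f, star (w f) * w (f ∘ π)
      = (Complex.normSq (∑ i, star (α i) * β i) : ℂ)
        + (m : ℂ)⁻¹ * (1 - (Complex.normSq (∑ i, star (α i) * β i) : ℂ)) := by
  obtain ⟨n, rfl⟩ : ∃ n, m = n + 1 := ⟨m - 1, by omega⟩
  set t : ℂ := ∑ i, star (α i) * β i with ht
  have hC : (starRingEnd ℂ) t * t = (Complex.normSq t : ℂ) := by
    rw [mul_comm, Complex.mul_conj]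
  have h1 : ∀ π : Equiv.Perm (Fin (n+1)),
      (∑ f, star (w f) * w (f ∘ π))
        = if π last = last then 1 else (Complex.normSq t : ℂ) := by
    intro π
    rw [← hC]
    subst hw
    exact inner_sum' (n+1) d α β hα hβ last π
  simp only [h1]
  rw [show (fun π : Equiv.Perm (Fin (n+1)) =>
        if π last = last then (1:ℂ) else (Complex.normSq t : ℂ))
      = fun π => (fun y => if y = last then (1:ℂ) else (Complex.normSq t : ℂ)) (π last)
      from rfl]
  rw [perm_sum n last (fun y => if y = last then (1:ℂ) else (Complex.normSq t : ℂ))]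
  have hcount : ∑ y : Fin (n+1), (if y = last then (1:ℂ) else (Complex.normSq t : ℂ))
      = 1 + n * (Complex.normSq t : ℂ) := by
    have h2 : ∀ y : Fin (n+1), (if y = last then (1:ℂ) else (Complex.normSq t : ℂ))
        = (Complex.normSq t : ℂ) + (if y = last then 1 - (Complex.normSq t : ℂ) else 0) := by
      intro y; by_cases h : y = last <;> simp [h]
    simp only [h2, Finset.sum_add_distrib, Finset.sum_const, Finset.sum_ite_eq',
      Finset.mem_univ, if_pos, Finset.card_univ, Fintype.card_fin, nsmul_eq_mul]
    push_cast
    ring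
  rw [hcount]
  have hf : ((n+1).factorial : ℂ) = (n + 1) * (n.factorial : ℂ) := by
    push_cast [Nat.factorial_succ]; ring
  have hfne : (n.factorial : ℂ) ≠ 0 := by
    exact_mod_cast Nat.cast_ne_zero.mpr (Nat.factorial_ne_zero n)
  have hne : ((n : ℂ) + 1) ≠ 0 := by
    have := Nat.cast_add_one_ne_zero (R := ℂ) n
    exact_mod_cast this
  rw [hf]
  push_cast
  field_simp
  ring
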